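/- arXiv:math/0410534 — 6 statements merged into one kernel-verified Lean document; each statement's English description precedes it below -/
import Mathlib

section
/- For all integers n ≥ 1 and 1 ≤ m ≤ n, the coefficient χ_m = (1/2)·C(n,m) + Σ_{k=1}^{min(m, n−m)} C(n,2k)·C(n−2k, m−k) satisfies χ_m ≤ C(n,m)·(n/2)^m, with equality when m = 1. -/
open Finset

private lemma two_pow_le_fact' (m : ℕ) : 2 ^ m ≤ (m + 1).factorial := by
  induction m with
  | zero => simp
  | succ m ih =>
    rw [pow_succ, Nat.factorial_succ]
    calc 2 ^ m * 2 ≤ (m + 1).factorial * 2 := Nat.mul_le_mul_right _ ih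
      _ ≤ (m + 2) * (m + 1).factorial := by
          have := Nat.factorial_pos (m + 1); nlinarith

private lemma chi_key (n m k : ℕ) (hkm : k ≤ m) (hk : k ≤ n - m) (hmn : m ≤ n) :
    n.choose (2 * k) * (n - 2 * k).choose (m - k) * (2 * k).choose k
      = n.choose m * (m.choose k * (n - m).choose k) := by
  have hmkn : m + k ≤ n := by omega
  have h1 : n.choose (m + k) * (m + k).choose (2 * k)
      = n.choose (2 * k) * (n - 2 * k).choose (m - k) := by
    have := Nat.choose_mul (n := n) (k := m + k) (s := 2 * k) (by omega)
    rwa [show m + k - 2 * k = m - k by omega] at this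
  have h2 : (m + k).choose (2 * k) * (2 * k).choose k
      = (m + k).choose k * m.choose k := by
    have := Nat.choose_mul (n := m + k) (k := 2 * k) (s := k) (by omega)
    rwa [show m + k - k = m by omega, show 2 * k - k = k by omega] at this
  have h3 : n.choose (m + k) * (m + k).choose m = n.choose m * (n - m).choose k := by
    have := Nat.choose_mul (n := n) (k := m + k) (s := m) (by omega)
    rwa [show m + k - m = k by omega] at this
  have h4 : (m + k).choose k = (m + k).choose m := by
    rw [← Nat.choose_symm (by omega : k ≤ m + k), show m + k - k = m by omega]
  calc n.choose (2 * k) * (n - 2 * k).choose (m - k) * (2 * k).choose k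
      = n.choose (m + k) * ((m + k).choose (2 * k) * (2 * k).choose k) := by
        rw [← h1]; ring
    _ = n.choose (m + k) * ((m + k).choose m * m.choose k) := by rw [h2, h4]
    _ = (n.choose m * (n - m).choose k) * m.choose k := by rw [← h3]; ring
    _ = _ := by ring

private lemma chi_vand (n m : ℕ) (hmn : m ≤ n) :
    n.choose m = 1 + ∑ k ∈ Icc 1 (min m (n - m)), m.choose k * (n - m).choose k := by
  have h0 : n.choose m = ∑ i ∈ range (m + 1), m.choose i * (n - m).choose i := by
    conv_lhs => rw [show n = (n - m) + m by omega, Nat.add_choose_eq]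
    rw [Finset.Nat.sum_antidiagonal_eq_sum_range_succ
      (fun i j => (n - m).choose i * m.choose j)]
    refine Finset.sum_congr rfl fun i hi => ?_
    rw [Finset.mem_range] at hi
    rw [Nat.choose_symm (by omega : i ≤ m), Nat.mul_comm]
  have h1 : range (m + 1) = insert 0 (Icc 1 m) := by
    ext x; simp [Finset.mem_Icc]; omega
  have h2 : ∑ k ∈ Icc 1 (min m (n - m)), m.choose k * (n - m).choose k
      = ∑ k ∈ Icc 1 m, m.choose k * (n - m).choose k := by
    apply Finset.sum_subset
    · apply Finset.Icc_subset_Icc_right; omega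
    · intro k hk hk'
      rw [Finset.mem_Icc] at hk hk'
      have : n - m < k := by omega
      rw [Nat.choose_eq_zero_of_lt this, Nat.mul_zero]
  rw [h0, h1, Finset.sum_insert (by simp), h2]
  simp

/-- For all integers `n ≥ 1` and `1 ≤ m ≤ n`, the coefficient
`χ_m = (1/2)·C(n,m) + Σ_{k=1}^{min(m, n−m)} C(n,2k)·C(n−2k, m−k)` satisfies
`χ_m ≤ C(n,m)·(n/2)^m`, with equality when `m = 1`. -/
theorem chi_le_binom_mul_half_n_pow (n m : ℕ) (hn : 1 ≤ n) (hm1 : 1 ≤ m) (hmn : m ≤ n) :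
    ((1 / 2 : ℚ) * (n.choose m : ℚ) +
        ∑ k ∈ Finset.Icc 1 (min m (n - m)),
          ((n.choose (2 * k) : ℚ) * ((n - 2 * k).choose (m - k) : ℚ)))
      ≤ (n.choose m : ℚ) * ((n : ℚ) / 2) ^ m ∧
    (m = 1 →
      ((1 / 2 : ℚ) * (n.choose m : ℚ) +
          ∑ k ∈ Finset.Icc 1 (min m (n - m)),
            ((n.choose (2 * k) : ℚ) * ((n - 2 * k).choose (m - k) : ℚ)))
        = (n.choose m : ℚ) * ((n : ℚ) / 2) ^ m) := by
  have hC : 0 < n.choose m := Nat.choose_pos hmn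
  constructor
  · -- the inequality
    have hsum_nat : 2 * ∑ k ∈ Icc 1 (min m (n - m)),
        n.choose (2 * k) * (n - 2 * k).choose (m - k)
        ≤ n.choose m * (n.choose m - 1) := by
      rw [Finset.mul_sum]
      calc ∑ k ∈ Icc 1 (min m (n - m)), 2 * (n.choose (2 * k) * (n - 2 * k).choose (m - k))
          ≤ ∑ k ∈ Icc 1 (min m (n - m)), n.choose m * (m.choose k * (n - m).choose k) := by
            apply Finset.sum_le_sum
            intro k hk
            rw [Finset.mem_Icc] at hk
            obtain ⟨hk1, hk2⟩ := hk
            have h2 : 2 ≤ (2 * k).choose k := by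
              obtain ⟨j, rfl⟩ : ∃ j, k = j + 1 := ⟨k - 1, by omega⟩
              rw [show 2 * (j + 1) = (2 * j + 1) + 1 by omega, Nat.choose_succ_succ]
              simp only [Nat.succ_eq_add_one]
              have p1 : 0 < (2 * j + 1).choose j := Nat.choose_pos (by omega)
              have p2 : 0 < (2 * j + 1).choose (j + 1) := Nat.choose_pos (by omega)
              omega
            calc 2 * (n.choose (2 * k) * (n - 2 * k).choose (m - k))
                ≤ (2 * k).choose k * (n.choose (2 * k) * (n - 2 * k).choose (m - k)) :=
                  Nat.mul_le_mul_right _ h2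
              _ = n.choose (2 * k) * (n - 2 * k).choose (m - k) * (2 * k).choose k := by ring
              _ = n.choose m * (m.choose k * (n - m).choose k) :=
                  chi_key n m k (by omega) (by omega) hmn
        _ = n.choose m * ∑ k ∈ Icc 1 (min m (n - m)), m.choose k * (n - m).choose k := by
            rw [Finset.mul_sum]
        _ = n.choose m * (n.choose m - 1) := by
            have := chi_vand n m hmn
            congr 1
            omega
    have hpow : n.choose m * 2 ^ m ≤ 2 * n ^ m := by
      have h1 : 2 ^ (m - 1) ≤ m.factorial := by
        have := two_pow_le_fact' (m - 1)
        rwa [show m - 1 + 1 = m by omega] at this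
      have h2 : n.choose m * m.factorial ≤ n ^ m := by
        have := Nat.descFactorial_le_pow n m
        rwa [Nat.descFactorial_eq_factorial_mul_choose, Nat.mul_comm] at this
      calc n.choose m * 2 ^ m = 2 * (n.choose m * 2 ^ (m - 1)) := by
            rw [show 2 ^ m = 2 * 2 ^ (m - 1) by
              rw [← pow_succ']; congr 1; omega]
            ring
        _ ≤ 2 * (n.choose m * m.factorial) :=
            Nat.mul_le_mul_left _ (Nat.mul_le_mul_left _ h1)
        _ ≤ 2 * n ^ m := Nat.mul_le_mul_left _ h2
    have hS : (∑ k ∈ Icc 1 (min m (n - m)),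
        ((n.choose (2 * k) : ℚ) * ((n - 2 * k).choose (m - k) : ℚ)))
        ≤ ((n.choose m : ℚ) * ((n.choose m : ℚ) - 1)) / 2 := by
      rw [le_div_iff₀ (by norm_num : (0:ℚ) < 2)]
      have hcast : ((n.choose m * (n.choose m - 1) : ℕ) : ℚ)
          = (n.choose m : ℚ) * ((n.choose m : ℚ) - 1) := by
        push_cast [Nat.cast_sub hC]
        ring
      calc (∑ k ∈ Icc 1 (min m (n - m)),
            ((n.choose (2 * k) : ℚ) * ((n - 2 * k).choose (m - k) : ℚ))) * 2
          = ((2 * ∑ k ∈ Icc 1 (min m (n - m)),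
              n.choose (2 * k) * (n - 2 * k).choose (m - k) : ℕ) : ℚ) := by
            push_cast
            ring
        _ ≤ ((n.choose m * (n.choose m - 1) : ℕ) : ℚ) := by exact_mod_cast hsum_nat
        _ = _ := hcast
    have hCQ : (0:ℚ) < (n.choose m : ℚ) := by exact_mod_cast hC
    calc (1 / 2 : ℚ) * (n.choose m : ℚ) +
          ∑ k ∈ Finset.Icc 1 (min m (n - m)),
            ((n.choose (2 * k) : ℚ) * ((n - 2 * k).choose (m - k) : ℚ))
        ≤ (1 / 2 : ℚ) * (n.choose m : ℚ)
            + ((n.choose m : ℚ) * ((n.choose m : ℚ) - 1)) / 2 := by linarith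
      _ = (n.choose m : ℚ) * ((n.choose m : ℚ) / 2) := by ring
      _ ≤ (n.choose m : ℚ) * (((n : ℚ) ^ m) / 2 ^ m) := by
          apply mul_le_mul_of_nonneg_left _ hCQ.le
          rw [div_le_div_iff₀ (by norm_num) (by positivity)]
          have : ((n.choose m * 2 ^ m : ℕ) : ℚ) ≤ ((2 * n ^ m : ℕ) : ℚ) := by
            exact_mod_cast hpow
          push_cast at this
          linarith
      _ = (n.choose m : ℚ) * ((n : ℚ) / 2) ^ m := by rw [div_pow]
  · -- equality for m = 1
    rintro rfl
    rcases Nat.lt_or_ge n 2 with h2 | h2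
    · interval_cases n
      norm_num
    · have hmin : min 1 (n - 1) = 1 := by omega
      rw [hmin]
      rw [Finset.Icc_self, Finset.sum_singleton]
      rw [show n - 2 * 1 = n - 2 by omega, show (1:ℕ) - 1 = 0 by omega]
      rw [Nat.choose_zero_right, Nat.choose_one_right]
      rw [show 2 * 1 = 2 by omega, Nat.cast_choose_two]
      push_cast
      ring
end

section
/- The number of pairs (η, ν) of {0,1}-sequences of length n such that η has exactly 2k ones, ν has exactly m ones, and ν restricted to the positions where η equals 1 is alternating, equals 2·C(n,2k)·C(n−2k, m−k), provided 1 ≤ k ≤ min(m, n−m). -/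
open scoped Classical

/-- The number of ones of a `{0,1}`-sequence of length `n`. -/
def onesCount {n : ℕ} (η : Fin n → Bool) : ℕ :=
  (Finset.univ.filter fun j => η j = true).card

/-- `ν` is `η`-alternating: the subsequence of `ν` at the positions where `η` is `1`,
taken in increasing index order, alternates between `0` and `1`. -/
def IsAlternatingOn {n : ℕ} (η ν : Fin n → Bool) : Prop :=
  (((List.finRange n).filter fun j => η j).map ν).Chain' (· ≠ ·)

open Finset

/-- alternating predicate on boolean vectors -/
def AltP {L : ℕ} (w : Fin L → Bool) : Prop :=
  ∀ i : ℕ, (h : i + 1 < L) → w ⟨i, Nat.lt_of_succ_lt h⟩ ≠ w ⟨i + 1, h⟩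

def altVec (b : Bool) (L : ℕ) : Fin L → Bool := fun i => xor b (decide (i.val % 2 = 1))

lemma altP_altVec (b : Bool) (L : ℕ) : AltP (altVec b L) := by
  intro i h
  simp only [altVec, ne_eq]
  have h2 : ((i+1) % 2 = 1) ↔ ¬ (i % 2 = 1) := by omega
  cases b <;> simp [h2] <;> omega

lemma altP_determined {L : ℕ} {w : Fin L → Bool} (hw : AltP w) (hL : 0 < L) :
    ∀ i : Fin L, w i = altVec (w ⟨0, hL⟩) L i := by
  intro ⟨iv, hi⟩
  induction iv with
  | zero => simp [altVec]
  | succ j ih =>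
    have hj : j + 1 < L := hi
    have h1 : w ⟨j, Nat.lt_of_succ_lt hj⟩ ≠ w ⟨j+1, hj⟩ := hw j hj
    have h2 := ih (Nat.lt_of_succ_lt hj)
    have h3 : ((j+1) % 2 = 1) ↔ ¬ (j % 2 = 1) := by omega
    simp only [altVec] at h2 ⊢
    rw [h2] at h1
    revert h1
    cases w ⟨0, hL⟩ <;> simp [h3] <;> cases hd : decide (j % 2 = 1) <;> simp_all

lemma card_altP {L : ℕ} (hL : 0 < L) :
    (univ.filter fun w : Fin L → Bool => AltP w).card = 2 := by
  have : ((univ : Finset Bool)).card = 2 := by simp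
  rw [← this]
  apply Finset.card_nbij' (fun w => w ⟨0, hL⟩) (fun b => altVec b L)
  · intro a _; simp
  · intro b _; simpa using altP_altVec b L
  · intro w hw
    simp only [Finset.mem_coe, mem_filter] at hw
    exact (funext fun i => (altP_determined hw.2 hL i)).symm
  · intro b _; simp [altVec]

lemma card_range_even (k : ℕ) : ((Finset.range (2*k)).filter fun i => i % 2 = 0).card = k := by
  induction k with
  | zero => simp
  | succ k ih =>
    have h : 2 * (k+1) = (2*k) + 1 + 1 := by ring
    have h1 : ¬ ((2*k+1) % 2 = 0) := by omega
    have h2 : (2*k) % 2 = 0 := by omega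
    have h3 : (2*k : ℕ) ∉ (Finset.range (2*k)).filter fun i => i % 2 = 0 := by simp
    rw [h, Finset.range_add_one, Finset.range_add_one, Finset.filter_insert, Finset.filter_insert,
      if_neg h1, if_pos h2, Finset.card_insert_of_notMem h3, ih]

lemma card_range_odd (k : ℕ) : ((Finset.range (2*k)).filter fun i => i % 2 = 1).card = k := by
  have := Finset.card_filter_add_card_filter_not (s := Finset.range (2*k))
    (p := fun i => i % 2 = 0)
  have he := card_range_even k
  have hco : ((Finset.range (2*k)).filter fun i => ¬ i % 2 = 0).card
      = ((Finset.range (2*k)).filter fun i => i % 2 = 1).card := by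
    congr 1
    ext i
    simp only [Finset.mem_filter, Finset.mem_range]
    omega
  rw [he, hco, Finset.card_range] at this
  omega

lemma card_fin_filter_val {N : ℕ} (p : ℕ → Prop) [DecidablePred p] :
    (univ.filter fun i : Fin N => p i.val).card = ((Finset.range N).filter p).card := by
  apply Finset.card_nbij (fun i => i.val)
  · intro a ha; simp only [Finset.mem_coe, mem_filter, Finset.mem_range] at *; exact ⟨a.isLt, ha.2⟩
  · intro a _ b _ h; exact Fin.ext h
  · intro x hx
    simp only [Finset.coe_filter, Finset.mem_range, Set.mem_setOf_eq] at hx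
    exact ⟨⟨x, hx.1⟩, by simp [hx.2], rfl⟩

lemma cnt_altVec (b : Bool) (k : ℕ) : onesCount (altVec b (2*k)) = k := by
  unfold onesCount altVec
  cases b
  · have e1 : (univ.filter fun i : Fin (2*k) => (xor false (decide (i.val % 2 = 1))) = true)
        = univ.filter fun i : Fin (2*k) => i.val % 2 = 1 := by
      ext i; simp
    rw [e1]; exact (card_fin_filter_val (p := fun x => x % 2 = 1)).trans (card_range_odd k)
  · have e1 : (univ.filter fun i : Fin (2*k) => (xor true (decide (i.val % 2 = 1))) = true)
        = univ.filter fun i : Fin (2*k) => i.val % 2 = 0 := by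
      ext i; simp
    rw [e1]; exact (card_fin_filter_val (p := fun x => x % 2 = 0)).trans (card_range_even k)

lemma cnt_of_altP {k : ℕ} {w : Fin (2*k) → Bool} (hw : AltP w) (hk : 0 < k) :
    onesCount w = k := by
  have hL : 0 < 2*k := by omega
  have : w = altVec (w ⟨0, hL⟩) (2*k) := funext fun i => altP_determined hw hL i
  rw [this]; exact cnt_altVec _ k

lemma card_onesCount (L t : ℕ) :
    (univ.filter fun w : Fin L → Bool => onesCount w = t).card = L.choose t := by
  have hc : (Finset.powersetCard t (univ : Finset (Fin L))).card = L.choose t := by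
    rw [Finset.card_powersetCard]; simp
  rw [← hc]
  apply Finset.card_nbij' (fun w => univ.filter fun j => w j = true)
    (fun s => fun j => decide (j ∈ s))
  · intro w hw
    simp only [Finset.mem_coe, mem_filter] at hw
    rw [Finset.mem_coe, Finset.mem_powersetCard]
    exact ⟨Finset.subset_univ _, hw.2⟩
  · intro s hs
    rw [Finset.mem_coe, Finset.mem_powersetCard] at hs
    refine Finset.mem_filter.mpr ⟨mem_univ _, ?_⟩; simp only [onesCount]
    rw [← hs.2]
    congr 1
    ext j; simp
  · intro w _; funext j; simp
  · intro s _; ext j; simp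

/-- restriction of `ν` along a list of positions of known length -/
def restr {n L : ℕ} (l : List (Fin n)) (h : l.length = L) (ν : Fin n → Bool) : Fin L → Bool :=
  fun i => ν (l.get (Fin.cast h.symm i))

lemma onesCount_restr {n L : ℕ} (l : List (Fin n)) (hnd : l.Nodup) (h : l.length = L)
    (ν : Fin n → Bool) :
    onesCount (restr l h ν) = (l.toFinset.filter fun j => ν j = true).card := by
  apply Finset.card_nbij (fun i => l.get (Fin.cast h.symm i))
  · intro a ha
    simp only [Finset.mem_coe, mem_filter, mem_univ, true_and, List.mem_toFinset] at ha ⊢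
    exact ⟨List.get_mem _ _, ha⟩
  · intro a _ b _ hab
    have h2 : Fin.cast h.symm a = Fin.cast h.symm b :=
      (List.nodup_iff_injective_get.mp hnd) hab
    exact Fin.cast_injective _ h2
  · intro x hx
    simp only [Finset.coe_filter, List.mem_toFinset, Set.mem_setOf_eq] at hx
    have hlt : l.idxOf x < l.length := List.idxOf_lt_length_iff.2 hx.1
    refine ⟨Fin.cast h ⟨l.idxOf x, hlt⟩, ?_, ?_⟩
    · simp only [Finset.mem_coe, mem_filter, mem_univ, true_and]
      show ν (l.get _) = true
      rw [show l.get (Fin.cast h.symm (Fin.cast h ⟨l.idxOf x, hlt⟩)) = x from List.idxOf_get _]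
      exact hx.2
    · exact List.idxOf_get _

lemma altP_restr {n L : ℕ} (η ν : Fin n → Bool)
    (h : ((List.finRange n).filter fun j => η j).length = L) :
    IsAlternatingOn η ν ↔ AltP (restr _ h ν) := by
  rw [IsAlternatingOn, List.Chain', List.isChain_iff_getElem]
  constructor
  · intro hc i hi
    have hi2 : i + 1 < ((((List.finRange n).filter fun j => η j)).map ν).length := by
      rw [List.length_map, h]; omega
    have h2 := hc i hi2
    simp only [List.get_eq_getElem, List.getElem_map] at h2
    simpa [restr, List.get_eq_getElem] using h2
  · intro ha i hi
    have hiL : i + 1 < L := by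
      have h3 := hi
      rw [List.length_map, h] at h3
      omega
    have h2 := ha i hiL
    simp only [restr, List.get_eq_getElem] at h2
    simp only [List.get_eq_getElem, List.getElem_map]
    exact h2

lemma onesCount_split {n : ℕ} (η ν : Fin n → Bool) :
    onesCount ν = ((univ.filter fun j => η j = true).filter fun j => ν j = true).card
      + ((univ.filter fun j => η j = false).filter fun j => ν j = true).card := by
  have h := Finset.card_filter_add_card_filter_not
    (s := univ.filter fun j : Fin n => ν j = true) (p := fun j => η j = true)
  have e1 : ((univ.filter fun j : Fin n => ν j = true).filter fun j => η j = true)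
      = ((univ.filter fun j : Fin n => η j = true)).filter fun j => ν j = true := by
    ext j; simp only [mem_filter, mem_univ, true_and]; tauto
  have e2 : ((univ.filter fun j : Fin n => ν j = true).filter fun j => ¬ η j = true)
      = ((univ.filter fun j : Fin n => η j = false)).filter fun j => ν j = true := by
    ext j; simp only [mem_filter, mem_univ, true_and, Bool.not_eq_true]; tauto
  rw [e1, e2] at h
  exact h.symm

lemma inner_count {n k m : ℕ} (hk : 1 ≤ k) (hkm : k ≤ m) (h2k : 2*k ≤ n)
    (η : Fin n → Bool) (hη : onesCount η = 2*k) :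
    (univ.filter fun ν : Fin n → Bool => onesCount ν = m ∧ IsAlternatingOn η ν).card
      = 2 * (n - 2*k).choose (m - k) := by
  set l : List (Fin n) := (List.finRange n).filter (fun j => η j) with hldef
  set l' : List (Fin n) := (List.finRange n).filter (fun j => !(η j)) with hl'def
  have hnd : l.Nodup := (List.nodup_finRange n).filter _
  have hnd' : l'.Nodup := (List.nodup_finRange n).filter _
  have hmem : ∀ j, j ∈ l ↔ η j = true := by
    intro j; simp [hldef, List.mem_filter]
  have hmem' : ∀ j, j ∈ l' ↔ η j = false := by
    intro j; simp [hl'def, List.mem_filter]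
  have htf : l.toFinset = univ.filter fun j => η j = true := by
    ext j; simp [hmem]
  have htf' : l'.toFinset = univ.filter fun j => η j = false := by
    ext j; simp [hmem']
  have hlen : l.length = 2*k := by
    rw [← List.toFinset_card_of_nodup hnd, htf]; exact hη
  have hlen' : l'.length = n - 2*k := by
    have h := Finset.card_filter_add_card_filter_not
      (s := (univ : Finset (Fin n))) (p := fun j => η j = true)
    have e : (univ.filter fun j : Fin n => ¬ η j = true)
        = univ.filter fun j : Fin n => η j = false := by
      ext j; simp
    rw [e] at h
    have h1 : (univ.filter fun j : Fin n => η j = true).card = 2*k := hη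
    have h2 : (univ : Finset (Fin n)).card = n := by simp
    rw [← List.toFinset_card_of_nodup hnd', htf']
    omega
  have key : ∀ ν : Fin n → Bool,
      onesCount ν = onesCount (restr l hlen ν) + onesCount (restr l' hlen' ν) := by
    intro ν
    rw [onesCount_split η ν, onesCount_restr l hnd hlen, onesCount_restr l' hnd' hlen',
      htf, htf']
  have hTcard : ((univ.filter fun u : Fin (2*k) → Bool => AltP u)
      ×ˢ (univ.filter fun v : Fin (n-2*k) → Bool => onesCount v = m - k)).card
      = 2 * (n - 2*k).choose (m - k) := by
    rw [Finset.card_product, card_altP (by omega), card_onesCount]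
  rw [← hTcard]
  set J : ((Fin (2*k) → Bool) × (Fin (n-2*k) → Bool)) → (Fin n → Bool) :=
    fun p x =>
      if hx : η x = true then
        p.1 (Fin.cast hlen ⟨l.idxOf x, List.idxOf_lt_length_iff.2 ((hmem x).2 hx)⟩)
      else
        p.2 (Fin.cast hlen' ⟨l'.idxOf x,
          List.idxOf_lt_length_iff.2 ((hmem' x).2 (by simpa using hx))⟩) with hJdef
  have hJ1 : ∀ p, restr l hlen (J p) = p.1 := by
    intro p
    funext i
    have hx : η (l.get (Fin.cast hlen.symm i)) = true := (hmem _).1 (List.get_mem _ _)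
    show J p (l.get (Fin.cast hlen.symm i)) = p.1 i
    rw [hJdef]
    simp only [dif_pos hx]
    have hval : l.idxOf (l.get (Fin.cast hlen.symm i)) = i.val := List.get_idxOf hnd _
    exact congrArg p.1 (Fin.ext hval)
  have hJ2 : ∀ p, restr l' hlen' (J p) = p.2 := by
    intro p
    funext i
    have hx : η (l'.get (Fin.cast hlen'.symm i)) = false := (hmem' _).1 (List.get_mem _ _)
    show J p (l'.get (Fin.cast hlen'.symm i)) = p.2 i
    rw [hJdef]
    simp only [hx, Bool.false_eq_true, dif_neg, not_false_iff]
    have hval : l'.idxOf (l'.get (Fin.cast hlen'.symm i)) = i.val := List.get_idxOf hnd' _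
    exact congrArg p.2 (Fin.ext hval)
  apply Finset.card_nbij' (fun ν => (restr l hlen ν, restr l' hlen' ν)) J
  · intro ν hν
    simp only [Finset.mem_coe, mem_filter, mem_univ, true_and] at hν
    obtain ⟨hm, halt⟩ := hν
    have hA : AltP (restr l hlen ν) := (altP_restr η ν hlen).1 halt
    have hc1 : onesCount (restr l hlen ν) = k := cnt_of_altP hA (by omega)
    rw [Finset.mem_coe, Finset.mem_product]
    constructor
    · simp only [mem_filter, mem_univ, true_and]; exact hA
    · simp only [mem_filter, mem_univ, true_and]
      have := key ν
      omega
  · intro p hp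
    rw [Finset.mem_coe, Finset.mem_product] at hp
    simp only [Finset.mem_coe, mem_filter, mem_univ, true_and] at hp ⊢
    have hA : AltP p.1 := hp.1
    have hA' : AltP (restr l hlen (J p)) := by rw [hJ1]; exact hA
    refine ⟨?_, (altP_restr η (J p) hlen).2 hA'⟩
    have h1 := key (J p)
    rw [hJ1, hJ2] at h1
    have hc1 : onesCount p.1 = k := cnt_of_altP hA (by omega)
    have hc2 : onesCount p.2 = m - k := hp.2
    omega
  · intro ν _
    funext x
    by_cases hx : η x = true
    · show J _ x = ν x
      rw [hJdef]
      simp only [dif_pos hx]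
      show ν (l.get _) = ν x
      exact congrArg ν (List.idxOf_get _)
    · show J _ x = ν x
      rw [hJdef]
      simp only [dif_neg hx]
      show ν (l'.get _) = ν x
      exact congrArg ν (List.idxOf_get _)
  · intro p _
    exact Prod.ext (hJ1 p) (hJ2 p)

/-- The number of pairs `(η, ν)` of `{0,1}`-sequences of length `n` such that `η` has
exactly `2k` ones, `ν` has exactly `m` ones, and `ν` restricted to the positions where
`η` equals `1` is alternating, equals `2·C(n,2k)·C(n−2k, m−k)`, provided
`1 ≤ k ≤ min(m, n−m)`. -/
theorem card_alternating_pairs (n k m : ℕ) (hk : 1 ≤ k) (hkm : k ≤ m) (hknm : k ≤ n - m)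
    (hmn : m ≤ n) :
    (Finset.univ.filter fun p : (Fin n → Bool) × (Fin n → Bool) =>
        onesCount p.1 = 2 * k ∧ onesCount p.2 = m ∧ IsAlternatingOn p.1 p.2).card
      = 2 * n.choose (2 * k) * (n - 2 * k).choose (m - k) := by
  have h2k : 2 * k ≤ n := by omega
  rw [Finset.card_eq_sum_card_fiberwise (f := Prod.fst)
    (t := univ.filter fun η : Fin n → Bool => onesCount η = 2*k)
    (fun p hp => by
      simp only [Finset.mem_coe, mem_filter, mem_univ, true_and] at hp ⊢
      exact hp.1)]
  have hsum : ∀ η ∈ (univ.filter fun η : Fin n → Bool => onesCount η = 2*k),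
      ((univ.filter fun p : (Fin n → Bool) × (Fin n → Bool) =>
          onesCount p.1 = 2 * k ∧ onesCount p.2 = m ∧ IsAlternatingOn p.1 p.2).filter
        fun p => p.1 = η).card = 2 * (n - 2*k).choose (m - k) := by
    intro η hη
    simp only [mem_filter, mem_univ, true_and] at hη
    have hfiber : ((univ.filter fun p : (Fin n → Bool) × (Fin n → Bool) =>
          onesCount p.1 = 2 * k ∧ onesCount p.2 = m ∧ IsAlternatingOn p.1 p.2).filter
        fun p => p.1 = η).card
        = (univ.filter fun ν : Fin n → Bool =>
            onesCount ν = m ∧ IsAlternatingOn η ν).card := by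
      apply Finset.card_nbij' (fun p => p.2) (fun ν => (η, ν))
      · intro p hp
        simp only [Finset.mem_coe, mem_filter, mem_univ, true_and] at hp ⊢
        obtain ⟨⟨_, h2, h3⟩, h4⟩ := hp
        exact ⟨h2, h4 ▸ h3⟩
      · intro ν hν
        simp only [Finset.mem_coe, mem_filter, mem_univ, true_and] at hν
        refine Finset.mem_filter.mpr ⟨Finset.mem_filter.mpr ⟨Finset.mem_univ _, hη, hν.1, hν.2⟩, rfl⟩
      · intro p hp
        simp only [Finset.mem_coe, mem_filter] at hp
        exact Prod.ext hp.2.symm rfl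
      · intro ν _
        rfl
    rw [hfiber, inner_count hk hkm h2k η hη]
  rw [Finset.sum_congr rfl hsum, Finset.sum_const, smul_eq_mul, card_onesCount]
  ring
end

section
/- The adjoint of the q-creation operator c_q(f) on the q-Fock space acts as c_q*(f)Ω = 0 and c_q*(f)(f_1⊗···⊗f_k) = Σ_{j=1}^k q^{j−1}(f_j, f)·f_1⊗···⊗f_{j−1}⊗f_{j+1}⊗···⊗f_k. -/
/-!
A permutation `π` of `Fin (k + 1)` is the same as the pair `(π 0, σ)`, where `σ` is the
permutation of `Fin k` that `π` induces on the remaining points: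
`π (i + 1) = (π 0).succAbove (σ i)`. The inversions of `π` are those of `σ` together with the
`π 0` pairs `(0, i + 1)` with `π (i + 1) < π 0`. Splitting the sum defining `qForm` along this
decomposition and pulling out the `i = 0` factor `⟪f, ψ (π 0)⟫` of the product gives the formula.
-/

open scoped RealInnerProductSpace

/-- The number of inversions of a permutation of `Fin k`. -/
def inversions {k : ℕ} (π : Equiv.Perm (Fin k)) : ℕ :=
  (Finset.univ.filter fun p : Fin k × Fin k => p.1 < p.2 ∧ π p.2 < π p.1).card

/-- The `q`-inner product of two simple tensors of the same degree over a real Hilbert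
space: `(f_1⊗···⊗f_k, g_1⊗···⊗g_k)_q = Σ_{π ∈ S_k} q^{ι(π)} Π_i (f_i, g_{π(i)})`. -/
noncomputable def qForm {H : Type*} [NormedAddCommGroup H] [InnerProductSpace ℝ H]
    (q : ℝ) {k : ℕ} (f g : Fin k → H) : ℝ :=
  ∑ π : Equiv.Perm (Fin k), q ^ inversions π * ∏ i : Fin k, ⟪f i, g (π i)⟫

/-- Remove the `j`-th entry of a tuple. -/
def removeAt {H : Type*} {k : ℕ} (j : Fin k) (φ : Fin k → H) : Fin (k - 1) → H :=
  fun i =>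
    if h : (i : ℕ) < (j : ℕ) then φ ⟨i, by omega⟩
    else φ ⟨(i : ℕ) + 1, by have := i.isLt; omega⟩

/-- The permutation of `Fin (k + 1)` sending `0` to `j` and `i.succ` to `j.succAbove (σ i)`. -/
def permCons {k : ℕ} (j : Fin (k + 1)) (σ : Equiv.Perm (Fin k)) : Equiv.Perm (Fin (k + 1)) :=
  (finSuccEquiv k).trans (σ.optionCongr.trans (finSuccEquiv' j).symm)

@[simp]
lemma permCons_zero {k : ℕ} (j : Fin (k + 1)) (σ : Equiv.Perm (Fin k)) : permCons j σ 0 = j := by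
  simp [permCons]

@[simp]
lemma permCons_succ {k : ℕ} (j : Fin (k + 1)) (σ : Equiv.Perm (Fin k)) (i : Fin k) :
    permCons j σ i.succ = j.succAbove (σ i) := by
  simp [permCons]

lemma permCons_bijective {k : ℕ} :
    Function.Bijective fun p : Fin (k + 1) × Equiv.Perm (Fin k) => permCons p.1 p.2 := by
  rw [Fintype.bijective_iff_injective_and_card]
  refine ⟨?_, by simp [Fintype.card_perm, Nat.factorial_succ]⟩
  rintro ⟨j, σ⟩ ⟨j', σ'⟩ h
  obtain rfl : j = j' := by simpa using congrArg (· 0) h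
  refine Prod.ext rfl (Equiv.ext fun i => Fin.succAbove_right_injective (p := j) ?_)
  simpa using congrArg (· i.succ) h

lemma inversions_permCons {k : ℕ} (j : Fin (k + 1)) (σ : Equiv.Perm (Fin k)) :
    inversions (permCons j σ) = (j : ℕ) + inversions σ := by
  unfold inversions
  rw [Finset.card_filter, Finset.card_filter, Fintype.sum_prod_type, Fintype.sum_prod_type]
  simp only [Fin.sum_univ_succ, permCons_zero, permCons_succ, false_and, if_false, Fin.succ_pos,
    true_and, Fin.not_lt_zero, Fin.succ_lt_succ_iff, Fin.succAbove_lt_succAbove_iff,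
    Fin.succAbove_lt_iff_castSucc_lt, zero_add]
  rw [Equiv.sum_comp σ fun m : Fin k => if m.castSucc < j then 1 else 0, ← Finset.card_filter]
  simp only [Fin.lt_def, Fin.val_castSucc]
  rw [Fin.card_filter_val_lt, min_eq_right (Nat.lt_succ_iff.mp j.isLt)]

lemma removeAt_eq_comp_succAbove {H : Type*} {k : ℕ} (j : Fin (k + 1)) (ψ : Fin (k + 1) → H) :
    removeAt j ψ = ψ ∘ j.succAbove := by
  ext m
  unfold removeAt
  split_ifs with h
  · rw [Function.comp_apply, Fin.succAbove_of_castSucc_lt _ _ (by simpa [Fin.lt_def] using h)]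
    rfl
  · rw [Function.comp_apply, Fin.succAbove_of_le_castSucc _ _ (by simp [Fin.le_def]; omega)]
    rfl

theorem creation_adjoint_formula_general {H : Type*} [NormedAddCommGroup H]
    [InnerProductSpace ℝ H] (q : ℝ)
    (f : H) (k : ℕ) (φ : Fin k → H) (ψ : Fin (k + 1) → H) :
    qForm q (Fin.cons f φ) ψ
      = ∑ j : Fin (k + 1), q ^ (j : ℕ) * ⟪ψ j, f⟫ * qForm q φ (removeAt j ψ) := by
  unfold qForm
  rw [← Fintype.sum_bijective _ permCons_bijective _ _ fun _ => rfl, Fintype.sum_prod_type]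
  refine Finset.sum_congr rfl fun j _ => ?_
  rw [Finset.mul_sum]
  refine Finset.sum_congr rfl fun σ _ => ?_
  rw [inversions_permCons, pow_add, Fin.prod_univ_succ, removeAt_eq_comp_succAbove]
  simp only [permCons_zero, permCons_succ, Fin.cons_zero, Fin.cons_succ, Function.comp_apply,
    real_inner_comm f (ψ j)]
  ring

/-- The adjoint of the `q`-creation operator `c_q(f)` (prepending the tensor factor `f`)
on the `q`-Fock space acts as
`c_q*(f)(g_1⊗···⊗g_{k+1}) = Σ_{j=1}^{k+1} q^{j−1}(g_j, f)·g_1⊗···⊗ĝ_j⊗···⊗g_{k+1}`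
(and `c_q*(f)Ω = 0`): that is, pairing against any simple tensor,
`(c_q(f)(φ_1⊗⋯⊗φ_k), ψ_1⊗⋯⊗ψ_{k+1})_q = Σ_j q^{j−1}(ψ_j, f)·(φ, ψ_ĵ)_q`.
(The vacuum part `c_q*(f)Ω = 0` corresponds to the degree-0 pairing
`(c_q(f)Ω, ψ_1)_q = (ψ_1, f)(Ω, Ω)_q`, the `k = 0` case of the identity.) -/
theorem creation_adjoint_formula {H : Type*} [NormedAddCommGroup H]
    [InnerProductSpace ℝ H] (q : ℝ) (hq1 : -1 < q) (hq2 : q < 1)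
    (f : H) (k : ℕ) (φ : Fin k → H) (ψ : Fin (k + 1) → H) :
    qForm q (Fin.cons f φ) ψ
      = ∑ j : Fin (k + 1), q ^ (j : ℕ) * ⟪ψ j, f⟫ * qForm q φ (removeAt j ψ) :=
  creation_adjoint_formula_general q f k φ ψ
end

section
/- The state τ_σ on the mixed-spin algebra C(I,σ) defined by τ_σ(x_A) = δ_{A,∅} on the basis {x_A} is tracial: τ_σ(ab) = τ_σ(ba) for all a, b ∈ C(I,σ). -/
/-- The state `τ_σ` on the mixed-spin algebra `C(I,σ)`, defined by `τ_σ(x_A) = δ_{A,∅}`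
on the linear basis `{x_A}` of increasing monomials, is tracial:
`τ_σ(ab) = τ_σ(ba)` for all `a, b ∈ C(I,σ)`. -/
theorem mixedSpin_trace_is_tracial
    {I : Type} [Fintype I] [LinearOrder I]
    (σ : I → I → ℂ) (hσval : ∀ i j, σ i j = 1 ∨ σ i j = -1)
    (hσsym : ∀ i j, σ i j = σ j i) (hσdiag : ∀ i, σ i i = -1)
    (A : Type) [Ring A] [Algebra ℂ A] (x : I → A)
    (hrel : ∀ i j, x i * x j - σ i j • (x j * x i) = if i = j then (2 : A) else 0)
    (bas : Module.Basis (Finset I) ℂ A)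
    (hbas : ∀ s : Finset I, bas s = ((s.sort (· ≤ ·)).map x).prod)
    (τ : A → ℂ) (hτ : ∀ a, τ a = bas.repr a ∅) :
    ∀ a b : A, τ (a * b) = τ (b * a) := by
  classical
  -- symmetric difference facts
  have hsdi : ∀ (i : I) (S : Finset I), i ∉ S → symmDiff {i} S = insert i S := by
    intro i S h
    ext a; simp only [Finset.mem_symmDiff, Finset.mem_singleton, Finset.mem_insert]
    constructor
    · rintro (⟨rfl, -⟩ | ⟨hm, -⟩)
      · exact Or.inl rfl
      · exact Or.inr hm
    · rintro (rfl | hm)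
      · exact Or.inl ⟨rfl, h⟩
      · exact Or.inr ⟨hm, fun e => h (e ▸ hm)⟩
  have hsdins : ∀ (i j : I) (S : Finset I), j ∉ S → j ≠ i →
      insert j (symmDiff {i} S) = symmDiff {i} (insert j S) := by
    intro i j S hj hij
    ext a; simp only [Finset.mem_symmDiff, Finset.mem_singleton, Finset.mem_insert]
    constructor
    · rintro (rfl | ⟨rfl, hm⟩ | ⟨hm, hne⟩)
      · exact Or.inr ⟨Or.inl rfl, hij⟩
      · exact Or.inl ⟨rfl, fun h => hm (h.resolve_left (Ne.symm hij))⟩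
      · exact Or.inr ⟨Or.inr hm, hne⟩
    · rintro (⟨rfl, hm⟩ | ⟨(rfl | hm), hne⟩)
      · exact Or.inr (Or.inl ⟨rfl, fun h => hm (Or.inr h)⟩)
      · exact Or.inl rfl
      · exact Or.inr (Or.inr ⟨hm, hne⟩)
  have hsderase : ∀ (i : I) (S : Finset I), i ∉ S → symmDiff {i} (insert i S) = S := by
    intro i S h
    ext a; simp only [Finset.mem_symmDiff, Finset.mem_singleton, Finset.mem_insert]
    constructor
    · rintro (⟨rfl, hm⟩ | ⟨hm, hne⟩)
      · exact absurd (Or.inl rfl) hm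
      · exact hm.resolve_left hne
    · intro hm
      exact Or.inr ⟨Or.inr hm, fun e => h (e ▸ hm)⟩
  -- algebraic relations
  have hx2 : ∀ i, x i * x i = 1 := by
    intro i
    have h := hrel i i
    rw [if_pos rfl, hσdiag i, neg_smul, one_smul, sub_neg_eq_add, ← two_smul ℂ] at h
    have h2 : ((2 : ℂ))⁻¹ • ((2 : ℂ) • (x i * x i)) = ((2 : ℂ))⁻¹ • (2 : A) := by rw [h]
    rwa [smul_smul, inv_mul_cancel₀ (by norm_num : (2:ℂ) ≠ 0), one_smul,
      show (2 : A) = (2 : ℂ) • (1 : A) by rw [two_smul]; norm_num,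
      smul_smul, inv_mul_cancel₀ (by norm_num : (2:ℂ) ≠ 0), one_smul] at h2
  have hcomm : ∀ i j, i ≠ j → x i * x j = σ i j • (x j * x i) := by
    intro i j h
    have := hrel i j
    rw [if_neg h, sub_eq_zero] at this
    exact this
  -- bas of a sorted nodup list
  have hbasList : ∀ l : List I, l.Pairwise (· ≤ ·) → l.Nodup →
      bas l.toFinset = (l.map x).prod := by
    intro l hs hn
    rw [hbas, (List.toFinset_sort (· ≤ ·) hn).mpr hs]
  -- key lemma B': multiply a generator into a sorted nodup monomial
  have lemB' : ∀ l : List I, l.Pairwise (· ≤ ·) → l.Nodup → ∀ i, ∃ d : ℂ,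
      x i * (l.map x).prod = d • bas (symmDiff {i} l.toFinset) := by
    intro l
    induction l with
    | nil =>
      intro _ _ i
      refine ⟨1, ?_⟩
      simp only [List.map_nil, List.prod_nil, mul_one, List.toFinset_nil, one_smul]
      rw [← Finset.bot_eq_empty, symmDiff_bot, hbas, Finset.sort_singleton,
        List.map_singleton, List.prod_singleton]
    | cons j l' ih =>
      intro hs hn i
      have hs' : l'.Pairwise (· ≤ ·) := hs.of_cons
      have hle : ∀ b ∈ l', j ≤ b := fun b hb => (List.pairwise_cons.mp hs).1 b hb
      have hn' : l'.Nodup := hn.of_cons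
      have hjl' : j ∉ l' := (List.nodup_cons.mp hn).1
      simp only [List.map_cons, List.prod_cons, List.toFinset_cons]
      rcases lt_trichotomy i j with hij | rfl | hij
      · -- i < j : prepend
        refine ⟨1, ?_⟩
        have hiT : i ∉ (j :: l').toFinset := by
          simp only [List.toFinset_cons, Finset.mem_insert, List.mem_toFinset]
          rintro (rfl | hm)
          · exact absurd rfl hij.ne
          · exact absurd (hle i hm) (not_le.mpr hij)
        have hiT' : ∀ b ∈ (j :: l').toFinset, i ≤ b := by
          intro b hb
          simp only [List.toFinset_cons, Finset.mem_insert, List.mem_toFinset] at hb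
          rcases hb with rfl | hb
          · exact hij.le
          · exact hij.le.trans (hle b hb)
        have hiT2 : i ∉ insert j l'.toFinset := by simpa using hiT
        have hiT2' : ∀ b ∈ insert j l'.toFinset, i ≤ b := by
          intro b hb; exact hiT' b (by simpa using hb)
        rw [one_smul, hsdi i _ hiT2, hbas, Finset.sort_insert _ hiT2' hiT2,
          List.map_cons, List.prod_cons]
        congr 1
        have hsort : Finset.sort (insert j l'.toFinset) (· ≤ ·) = j :: l' := by
          rw [← List.toFinset_cons]; exact (List.toFinset_sort _ hn).mpr hs
        rw [hsort, List.map_cons, List.prod_cons]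
      · -- i = j : cancel
        refine ⟨1, ?_⟩
        rw [one_smul, ← mul_assoc, hx2, one_mul,
          hsderase i _ (by simpa using hjl'), hbasList l' hs' hn']
      · -- j < i : commute past j
        obtain ⟨d, hd⟩ := ih hs' hn' i
        refine ⟨σ i j * d, ?_⟩
        have hji : j ≠ i := hij.ne
        rw [← mul_assoc, hcomm i j hji.symm, smul_mul_assoc, mul_assoc, hd,
          mul_smul_comm, smul_smul]
        congr 1
        -- x j * bas (symmDiff {i} l'.toFinset) = bas (symmDiff {i} (insert j l'.toFinset))
        have hjT : j ∉ symmDiff {i} l'.toFinset := by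
          simp only [Finset.mem_symmDiff, Finset.mem_singleton, List.mem_toFinset]
          rintro (⟨rfl, -⟩ | ⟨hm, -⟩)
          · exact absurd rfl hji
          · exact hjl' hm
        have hjT' : ∀ b ∈ symmDiff {i} l'.toFinset, j ≤ b := by
          intro b hb
          simp only [Finset.mem_symmDiff, Finset.mem_singleton, List.mem_toFinset] at hb
          rcases hb with ⟨rfl, -⟩ | ⟨hm, -⟩
          · exact hij.le
          · exact hle b hm
        rw [← hsdins i j _ (by simpa using hjl') hji,
          hbas (insert j (symmDiff {i} l'.toFinset)),
          Finset.sort_insert _ hjT' hjT, List.map_cons, List.prod_cons, ← hbas]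
  have lemB : ∀ (i : I) (S : Finset I), ∃ d : ℂ,
      x i * bas S = d • bas (symmDiff {i} S) := by
    intro i S
    obtain ⟨d, hd⟩ := lemB' (S.sort (· ≤ ·)) (Finset.pairwise_sort _ _) (Finset.sort_nodup _ _) i
    refine ⟨d, ?_⟩
    rw [hbas, hd, Finset.sort_toFinset]
  -- lemma A: product of two basis elements
  have lemA' : ∀ (T : Finset I) (l : List I), l.Nodup → ∃ c : ℂ,
      (l.map x).prod * bas T = c • bas (symmDiff l.toFinset T) := by
    intro T l
    induction l with
    | nil =>
      intro _
      refine ⟨1, ?_⟩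
      simp only [List.map_nil, List.prod_nil, one_mul, List.toFinset_nil, one_smul]
      rw [← Finset.bot_eq_empty, bot_symmDiff]
    | cons i l' ih =>
      intro hn
      have hn' : l'.Nodup := hn.of_cons
      have hil' : i ∉ l' := (List.nodup_cons.mp hn).1
      obtain ⟨c, hc⟩ := ih hn'
      obtain ⟨d, hd⟩ := lemB i (symmDiff l'.toFinset T)
      refine ⟨c * d, ?_⟩
      simp only [List.map_cons, List.prod_cons, List.toFinset_cons]
      rw [mul_assoc, hc, mul_smul_comm, hd, smul_smul]
      congr 2
      rw [← symmDiff_assoc, hsdi i _ (by simpa using hil')]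
  have lemA : ∀ S T : Finset I, ∃ c : ℂ,
      bas S * bas T = c • bas (symmDiff S T) := by
    intro S T
    obtain ⟨c, hc⟩ := lemA' T (S.sort (· ≤ ·)) (Finset.sort_nodup _ _)
    refine ⟨c, ?_⟩
    rw [hbas S, hc, Finset.sort_toFinset]
  -- key: trace property on basis elements
  have key : ∀ S T : Finset I, bas.repr (bas S * bas T) ∅ = bas.repr (bas T * bas S) ∅ := by
    intro S T
    by_cases hST : S = T
    · subst hST; rfl
    · obtain ⟨c, hc⟩ := lemA S T
      obtain ⟨c', hc'⟩ := lemA T S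
      have hne : symmDiff S T ≠ ∅ := by
        intro h
        exact hST (symmDiff_eq_bot.mp (by rwa [Finset.bot_eq_empty]))
      have hne' : symmDiff T S ≠ ∅ := by
        rw [symmDiff_comm]; exact hne
      rw [hc, hc', map_smul, map_smul, Finsupp.smul_apply, Finsupp.smul_apply,
        Module.Basis.repr_self, Module.Basis.repr_self,
        Finsupp.single_apply, Finsupp.single_apply, if_neg hne, if_neg hne',
        smul_zero, smul_zero]
  -- conclude by bilinearity
  intro a b
  rw [hτ, hτ, ← bas.sum_repr a, ← bas.sum_repr b, Finset.sum_mul_sum, Finset.sum_mul_sum]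
  simp only [smul_mul_smul_comm, map_sum, map_smul, Finsupp.coe_finset_sum,
    Finset.sum_apply, Finsupp.smul_apply, smul_eq_mul]
  rw [Finset.sum_comm]
  refine Finset.sum_congr rfl fun S _ => Finset.sum_congr rfl fun T _ => ?_
  rw [key T S]
  ring
end

section
/- Hölder estimate in the mixed-spin algebra: if u_1,...,u_s lie in the subalgebra C(J×{0,1},σ|_J) with J = I∖{i}, and U is a product containing all of u_1,...,u_s together with a positive number of factors from {ẑ_i, ẑ_i*, ξ}, then τ_σ(U) ≤ (1/2)·‖u_1‖_s···‖u_s‖_s. -/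
/-- A `LawfulBEq` instance for sum types, needed to reason about `List.count`
on `Fin s ⊕ Fin 3`. -/
instance sumLawfulBEq {α β : Type*} [BEq α] [BEq β] [LawfulBEq α] [LawfulBEq β] :
    LawfulBEq (α ⊕ β) where
  eq_of_beq {a b} h := by
    cases a <;> cases b
    · exact congrArg Sum.inl (eq_of_beq h)
    · exact Bool.noConfusion h
    · exact Bool.noConfusion h
    · exact congrArg Sum.inr (eq_of_beq h)
  rfl {a} := by
    cases a with
    | inl v => exact beq_self_eq_true v
    | inr v => exact beq_self_eq_true v


/-- Hölder estimate in the doubled mixed-spin algebra `C(I×{0,1},σ)` (modeled as the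
mixed-spin algebra on a finite totally ordered set `K` with distinguished indices
`i₀, i₁` for the fixed site `i`, monomial basis, trace `τ`, and non-commutative
`L^p`-norms `Np`):  if `u_1,…,u_s` lie in the subalgebra generated by the generators
at the remaining indices, and `U` is a product containing each of `u_1,…,u_s` exactly
once together with a positive number of factors from `{ẑ, ẑ*, ξ}` (where
`ẑ = (x_{i₀} + i·x_{i₁})/2` and `ξ = ẑ*ẑ`), then `|τ(U)| ≤ (1/2)·‖u_1‖_s⋯‖u_s‖_s`.
The key facts — the generalized Hölder inequality for the trace, the norm identity
`‖hu‖_p = 2^{−1/p}‖u‖_p` for `h ∈ {ẑ, ẑ*, ξ, 1−ξ}` and `u` in the subalgebra, closure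
of `{ẑ, ẑ*, ξ}` under products up to `{ẑ, ẑ*, ξ, 1−ξ, 0}`, and traciality of `τ` — are
hypotheses. -/
theorem mixedSpin_holder_estimate
    {K : Type} [Fintype K] [LinearOrder K]
    (σ : K → K → ℂ) (hσval : ∀ i j, σ i j = 1 ∨ σ i j = -1)
    (hσsym : ∀ i j, σ i j = σ j i) (hσdiag : ∀ i, σ i i = -1)
    (A : Type) [Ring A] [Algebra ℂ A] [StarRing A] [StarModule ℂ A] (x : K → A)
    (hrel : ∀ i j, x i * x j - σ i j • (x j * x i) = if i = j then (2 : A) else 0)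
    (hstar : ∀ i, star (x i) = x i)
    (bas : Module.Basis (Finset K) ℂ A)
    (hbas : ∀ s : Finset K, bas s = ((s.sort (· ≤ ·)).map x).prod)
    (τ : A → ℂ) (hτ : ∀ a, τ a = bas.repr a ∅)
    (htracial : ∀ a b : A, τ (a * b) = τ (b * a))
    (i₀ i₁ : K) (hne : i₀ ≠ i₁) (hσab : σ i₀ i₁ = -1)
    (hcons : ∀ k, σ i₀ k = σ i₁ k)
    (zhat ξ : A)
    (hzhat : zhat = ((2 : ℂ))⁻¹ • (x i₀ + Complex.I • x i₁))
    (hξ : ξ = star zhat * zhat)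
    (S : Subalgebra ℂ A) (hS : S = Algebra.adjoin ℂ (x '' {k | k ≠ i₀ ∧ k ≠ i₁}))
    -- the non-commutative L^p norms and their key properties
    (Np : ℝ → A → ℝ)
    (hHolder : ∀ (l : List A) (ps : List ℝ), l.length = ps.length →
      (∀ q ∈ ps, 0 < q) → (ps.map fun q => 1 / q).sum = 1 →
      ‖τ l.prod‖ ≤ ((l.zip ps).map fun y => Np y.2 y.1).prod)
    (hfac : ∀ q : ℝ, 0 < q → ∀ h ∈ ({zhat, star zhat, ξ, 1 - ξ} : Set A),
      ∀ u ∈ S, Np q (h * u) = (2 : ℝ) ^ (-(1 / q)) * Np q u)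
    (hclosed : ∀ l : List A, l ≠ [] → (∀ a ∈ l, a ∈ ({zhat, star zhat, ξ} : Set A)) →
      l.prod ∈ ({zhat, star zhat, ξ, 1 - ξ, 0} : Set A))
    -- the product U
    (s : ℕ) (hs : 0 < s) (u : Fin s → A) (hu : ∀ j, u j ∈ S)
    (t : List (Fin s ⊕ Fin 3))
    (hcount : ∀ j : Fin s, t.count (Sum.inl j) = 1)
    (hspec : ∃ h : Fin 3, Sum.inr h ∈ t)
    (f : Fin s ⊕ Fin 3 → A) (hf : f = Sum.elim u ![zhat, star zhat, ξ]) :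
    ‖τ (t.map f).prod‖ ≤ (1 / 2) * ∏ j : Fin s, Np (s : ℝ) (u j) := by
  -- notation
  set M₄ : Set A := {zhat, star zhat, ξ, 1 - ξ} with hM₄
  -- basic generator identities
  have hsq : ∀ i : K, x i * x i = 1 := by
    intro i
    have h := hrel i i
    rw [hσdiag, if_pos rfl, neg_smul, one_smul, sub_neg_eq_add] at h
    have h2 : (2:ℂ) • (x i * x i) = (2:ℂ) • (1:A) := by
      rw [two_smul, two_smul, h]; norm_num
    calc x i * x i = (2:ℂ)⁻¹ • ((2:ℂ) • (x i * x i)) := by rw [inv_smul_smul₀ two_ne_zero]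
      _ = 1 := by rw [h2, inv_smul_smul₀ two_ne_zero]
  have hanti : x i₀ * x i₁ = -(x i₁ * x i₀) := by
    have h := hrel i₀ i₁
    rw [hσab, if_neg hne, neg_smul, one_smul, sub_neg_eq_add, add_eq_zero_iff_eq_neg] at h
    exact h
  have hW : star zhat = ((2 : ℂ))⁻¹ • (x i₀ - Complex.I • x i₁) := by
    rw [hzhat, star_smul, star_add, star_smul, hstar, hstar, Complex.star_def, Complex.conj_I,
      map_inv₀, Complex.conj_ofNat, neg_smul, ← sub_eq_add_neg]
  have key1 : zhat * zhat = 0 := by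
    rw [hzhat]
    simp only [mul_add, add_mul, smul_add, smul_mul_assoc, mul_smul_comm, smul_smul,
      hsq, hanti, Complex.I_mul_I]
    match_scalars <;> (ring_nf; try norm_num [Complex.I_sq])
  have key2 : star zhat * star zhat = 0 := by
    rw [← star_mul, key1, star_zero]
  have hζ : zhat * star zhat = 1 - ξ := by
    have key3 : zhat * star zhat + star zhat * zhat = 1 := by
      rw [hW, hzhat]
      simp only [mul_add, add_mul, mul_sub, sub_mul, smul_add, smul_sub, smul_mul_assoc,
        mul_smul_comm, smul_smul, hsq, hanti, Complex.I_mul_I]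
      match_scalars <;> (ring_nf; try norm_num [Complex.I_sq])
    rw [hξ, eq_sub_iff_add_eq]
    exact key3
  -- multiplication table
  have t1 : ξ * zhat = 0 := by rw [hξ, mul_assoc, key1, mul_zero]
  have t2 : zhat * ξ = zhat := by
    rw [hξ, ← mul_assoc, hζ, sub_mul, one_mul, t1, sub_zero]
  have t4 : star zhat * ξ = 0 := by rw [hξ, ← mul_assoc, key2, zero_mul]
  have t3 : ξ * star zhat = star zhat := by
    rw [hξ, mul_assoc, hζ, mul_sub, mul_one, t4, sub_zero]
  have t5 : ξ * ξ = ξ := by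
    nth_rewrite 1 [hξ]
    rw [mul_assoc, t2, ← hξ]
  -- ξ commutes with the subalgebra S
  have hcommζ : ∀ v ∈ S, ξ * v = v * ξ := by
    have hgen : ∀ k, k ≠ i₀ → k ≠ i₁ → x k * ξ = ξ * x k := by
      intro k hk0 hk1
      have c0 : x k * x i₀ = σ i₀ k • (x i₀ * x k) := by
        have h := hrel k i₀
        rw [if_neg hk0, sub_eq_zero] at h
        rw [h, hσsym]
      have c1 : x k * x i₁ = σ i₀ k • (x i₁ * x k) := by
        have h := hrel k i₁
        rw [if_neg hk1, sub_eq_zero] at h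
        rw [h, hσsym, ← hcons]
      have hz : x k * zhat = σ i₀ k • (zhat * x k) := by
        rw [hzhat]
        simp only [mul_add, add_mul, smul_add, smul_mul_assoc, mul_smul_comm, smul_smul, c0, c1]
        module
      have hw : x k * star zhat = σ i₀ k • (star zhat * x k) := by
        rw [hW]
        simp only [mul_sub, sub_mul, smul_sub, smul_mul_assoc, mul_smul_comm, smul_smul, c0, c1]
        module
      have hσ2 : σ i₀ k * σ i₀ k = 1 := by
        rcases hσval i₀ k with h | h <;> rw [h] <;> norm_num
      have e1 : x k * ξ = σ i₀ k • (star zhat * (x k * zhat)) := by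
        rw [hξ, ← mul_assoc, hw, smul_mul_assoc, mul_assoc]
      rw [e1, hz, mul_smul_comm, smul_smul, hσ2, one_smul, ← mul_assoc, ← hξ]
    intro v hv
    rw [hS] at hv
    have : Algebra.adjoin ℂ (x '' {k | k ≠ i₀ ∧ k ≠ i₁}) ≤ Subalgebra.centralizer ℂ {ξ} := by
      apply Algebra.adjoin_le
      rintro a ⟨k, ⟨hk0, hk1⟩, rfl⟩
      rw [SetLike.mem_coe, Subalgebra.mem_centralizer_iff]
      rintro g (rfl : g = ξ)
      exact (hgen k hk0 hk1).symm
    have hv' := this hv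
    rw [Subalgebra.mem_centralizer_iff] at hv'
    exact hv' ξ rfl
  have hcommζ' : ∀ v ∈ S, (1 - ξ) * v = v * (1 - ξ) := by
    intro v hv
    rw [sub_mul, mul_sub, one_mul, mul_one, hcommζ v hv]
  -- membership helpers
  have memz : zhat ∈ M₄ := by simp [hM₄]
  have memw : star zhat ∈ M₄ := by simp [hM₄]
  have memξ : ξ ∈ M₄ := by simp [hM₄]
  have memη : (1 - ξ) ∈ M₄ := by simp [hM₄]
  -- right absorbing idempotent
  have absorbE : ∀ c ∈ M₄, ∃ e, (e = ξ ∨ e = 1 - ξ) ∧ c * e = c := by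
    intro c hc
    simp only [hM₄, Set.mem_insert_iff, Set.mem_singleton_iff] at hc
    rcases hc with h | h | h | h
    · exact ⟨ξ, Or.inl rfl, by rw [h, t2]⟩
    · exact ⟨1 - ξ, Or.inr rfl, by rw [h, mul_sub, mul_one, t4, sub_zero]⟩
    · exact ⟨ξ, Or.inl rfl, by rw [h, t5]⟩
    · exact ⟨1 - ξ, Or.inr rfl,
        by rw [h, sub_mul, one_mul, mul_sub, mul_one, t5, sub_self, sub_zero]⟩
  have ecommS : ∀ e, (e = ξ ∨ e = 1 - ξ) → ∀ v ∈ S, e * v = v * e := by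
    rintro e (rfl | rfl) v hv
    · exact hcommζ v hv
    · exact hcommζ' v hv
  have ememM : ∀ e, (e = ξ ∨ e = 1 - ξ) → e ∈ M₄ := by
    rintro e (rfl | rfl)
    · exact memξ
    · exact memη
  -- the multiplication table : M₄ * M₄ ⊆ M₄ ∪ {0}
  have mulTable : ∀ c ∈ M₄, ∀ d ∈ M₄, c * d = 0 ∨ c * d ∈ M₄ := by
    intro c hc d hd
    simp only [hM₄, Set.mem_insert_iff, Set.mem_singleton_iff] at hc hd
    rcases hc with h1 | h1 | h1 | h1 <;> rcases hd with h2 | h2 | h2 | h2 <;> rw [h1, h2]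
    · exact Or.inl key1
    · exact Or.inr (by rw [hζ]; exact memη)
    · exact Or.inr (by rw [t2]; exact memz)
    · exact Or.inl (by rw [mul_sub, mul_one, t2, sub_self])
    · exact Or.inr (by rw [← hξ]; exact memξ)
    · exact Or.inl key2
    · exact Or.inl t4
    · exact Or.inr (by rw [mul_sub, mul_one, t4, sub_zero]; exact memw)
    · exact Or.inl t1
    · exact Or.inr (by rw [t3]; exact memw)
    · exact Or.inr (by rw [t5]; exact memξ)
    · exact Or.inl (by rw [mul_sub, mul_one, t5, sub_self])
    · exact Or.inr (by rw [sub_mul, one_mul, t1, sub_zero]; exact memz)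
    · exact Or.inl (by rw [sub_mul, one_mul, t3, sub_self])
    · exact Or.inl (by rw [sub_mul, one_mul, t5, sub_self])
    · exact Or.inr (by rw [sub_mul, one_mul, mul_sub, mul_one, t5, sub_self, sub_zero]; exact memη)
  -- products with S-membership of u j
  set g : A × Fin s → A := fun p => p.1 * u p.2 with hg
  set inls : List (Fin s ⊕ Fin 3) → List (Fin s) :=
    fun l => l.filterMap (Sum.elim some fun _ => none) with hinls
  -- f of an inr index is in M₄
  have hfr : ∀ h : Fin 3, f (Sum.inr h) ∈ M₄ := by
    intro h
    rw [hf]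
    fin_cases h
    · simpa using memz
    · simpa using memw
    · simpa using memξ
  have hfl : ∀ j : Fin s, f (Sum.inl j) = u j := by intro j; rw [hf]; rfl
  -- the scan lemma
  have scan : ∀ l : List (Fin s ⊕ Fin 3), ∀ c ∈ M₄,
      c * ((l.map f).prod) = 0 ∨
      ∃ P : List (A × Fin s), ∃ d, (∀ p ∈ P, p.1 ∈ M₄) ∧ d ∈ M₄ ∧
        P.map Prod.snd = inls l ∧
        c * (l.map f).prod = (P.map g).prod * d := by
    intro l
    induction l with
    | nil =>
      intro c hc
      exact Or.inr ⟨[], c, by simp, hc, by simp [hinls], by simp⟩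
    | cons hd tl ih =>
      intro c hc
      rcases hd with j | h
      · -- inl case
        obtain ⟨e, he, hce⟩ := absorbE c hc
        have hstep : c * ((Sum.inl j :: tl).map f).prod = (c * u j) * (e * (tl.map f).prod) := by
          rw [List.map_cons, List.prod_cons, hfl]
          calc c * (u j * (tl.map f).prod) = (c * e) * (u j * (tl.map f).prod) := by rw [hce]
            _ = c * ((e * u j) * (tl.map f).prod) := by noncomm_ring
            _ = c * ((u j * e) * (tl.map f).prod) := by rw [ecommS e he (u j) (hu j)]
            _ = (c * u j) * (e * (tl.map f).prod) := by noncomm_ring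
        rcases ih e (ememM e he) with h0 | ⟨P, d, hP, hd, hsnd, heq⟩
        · exact Or.inl (by rw [hstep, h0, mul_zero])
        · refine Or.inr ⟨(c, j) :: P, d, ?_, hd, ?_, ?_⟩
          · intro p hp
            rcases List.mem_cons.1 hp with rfl | hp'
            · exact hc
            · exact hP p hp'
          · simp [hinls, hsnd]
          · rw [hstep, heq, List.map_cons, List.prod_cons]
            simp only [hg]
            noncomm_ring
      · -- inr case
        have hstep : c * ((Sum.inr h :: tl).map f).prod = (c * f (Sum.inr h)) * (tl.map f).prod := by
          rw [List.map_cons, List.prod_cons, mul_assoc]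
        rcases mulTable c hc (f (Sum.inr h)) (hfr h) with h0 | hmem
        · exact Or.inl (by rw [hstep, h0, zero_mul])
        · rcases ih (c * f (Sum.inr h)) hmem with h0 | ⟨P, d, hP, hd, hsnd, heq⟩
          · exact Or.inl (by rw [hstep, h0])
          · exact Or.inr ⟨P, d, hP, hd, by simp [hinls] at hsnd ⊢; exact hsnd, by rw [hstep, heq]⟩
  -- zip-product computation
  have zipProd : ∀ Q : List (A × Fin s), (∀ p ∈ Q, p.1 ∈ M₄) →
      (((Q.map g).zip (List.replicate Q.length ((s:ℕ):ℝ))).map fun y => Np y.2 y.1).prod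
      = ((2:ℝ) ^ (-(1/(s:ℝ)))) ^ Q.length * (Q.map fun p => Np (s:ℝ) (u p.2)).prod := by
    intro Q
    induction Q with
    | nil => simp
    | cons p Q ih =>
      intro hQ
      have hspos : (0:ℝ) < (s:ℝ) := by exact_mod_cast hs
      rw [List.length_cons, List.map_cons, List.replicate_succ, List.zip_cons_cons,
        List.map_cons, List.prod_cons, List.map_cons, List.prod_cons,
        ih (fun q hq => hQ q (List.mem_cons_of_mem _ hq)), hg]
      have := hfac (s:ℝ) hspos p.1 (hQ p List.mem_cons_self) (u p.2) (hu p.2)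
      rw [this, pow_succ]
      ring
  -- sum condition for Hölder
  have hsum : ((List.replicate s ((s:ℕ):ℝ)).map fun q => 1 / q).sum = 1 := by
    rw [List.map_replicate, List.sum_replicate, nsmul_eq_mul]
    have : (s:ℝ) ≠ 0 := by exact_mod_cast hs.ne'
    field_simp
  have hqpos : ∀ q ∈ List.replicate s ((s:ℕ):ℝ), (0:ℝ) < q := by
    intro q hq
    rw [List.eq_of_mem_replicate hq]
    exact_mod_cast hs
  have hcoef : ((2:ℝ) ^ (-(1/(s:ℝ)))) ^ s = 1/2 := by
    rw [← Real.rpow_natCast ((2:ℝ) ^ (-(1/(s:ℝ)))), ← Real.rpow_mul (by norm_num)]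
    have hns : (s:ℝ) ≠ 0 := by exact_mod_cast hs.ne'
    have : (-(1/(s:ℝ))) * s = -1 := by field_simp
    rw [this, Real.rpow_neg_one]; norm_num
  -- Hölder estimate for a list Q of s factors in M₄ * S with snd a permutation
  have mainHolder : ∀ Q : List (A × Fin s), (∀ p ∈ Q, p.1 ∈ M₄) →
      (Q.map Prod.snd).Perm (List.finRange s) →
      ‖τ (Q.map g).prod‖ ≤ (1 / 2) * ∏ j : Fin s, Np (s : ℝ) (u j) := by
    intro Q hQ hperm
    have hlen : Q.length = s := by
      have := hperm.length_eq
      simpa using this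
    have h1 := hHolder (Q.map g) (List.replicate s ((s:ℕ):ℝ))
      (by simp [hlen]) hqpos hsum
    rw [show (List.replicate s ((s:ℕ):ℝ)) = List.replicate Q.length ((s:ℕ):ℝ) by rw [hlen]] at h1
    rw [zipProd Q hQ, hlen] at h1
    have hprodperm : (Q.map fun p => Np (s:ℝ) (u p.2)).prod = ∏ j : Fin s, Np (s:ℝ) (u j) := by
      have : Q.map (fun p => Np (s:ℝ) (u p.2)) = (Q.map Prod.snd).map (fun j => Np (s:ℝ) (u j)) := by
        rw [List.map_map]; rfl
      rw [this, (hperm.map (fun j => Np (s:ℝ) (u j))).prod_eq, ← Fin.prod_univ_def]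
    rw [hprodperm, hcoef] at h1
    exact h1
  -- nonnegativity of the RHS
  have hτ0 : ‖τ 0‖ = 0 := by
    rw [hτ, map_zero]
    simp
  have hnn : 0 ≤ (1 / 2) * ∏ j : Fin s, Np (s : ℝ) (u j) := by
    have := mainHolder ((List.finRange s).map fun j => ((ξ:A), j))
      (by intro p hp; simp at hp; obtain ⟨j, _, rfl⟩ := hp; exact memξ)
      (by rw [List.map_map]; simp [Function.comp])
    exact le_trans (norm_nonneg _) this
  -- decompose t at an inr factor and rotate
  obtain ⟨h0, hmem0⟩ := hspec
  obtain ⟨a₁, b₁, ht⟩ := List.append_of_mem hmem0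
  subst ht
  have hrot : τ ((( a₁ ++ Sum.inr h0 :: b₁).map f).prod)
      = τ (f (Sum.inr h0) * ((b₁ ++ a₁).map f).prod) := by
    rw [List.map_append, List.prod_append, List.map_cons, List.prod_cons, htracial,
      List.map_append, List.prod_append, mul_assoc]
  rw [hrot]
  -- count facts for l = b₁ ++ a₁
  have count_inls : ∀ (l' : List (Fin s ⊕ Fin 3)) (j : Fin s),
      (inls l').count j = l'.count (Sum.inl j) := by
    intro l' j
    induction l' with
    | nil => simp [hinls]
    | cons hd tl ih =>
      rcases hd with j' | h'
      · simp only [hinls] at ih ⊢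
        rw [List.filterMap_cons]
        simp only [Sum.elim_inl, Option.toList]
        by_cases hjj : j' = j
        · subst hjj
          rw [List.count_cons_self, List.count_cons_self, ih]
        · rw [List.count_cons_of_ne hjj, ih,
            List.count_cons_of_ne (by simp [hjj])]
      · simp only [hinls] at ih ⊢
        rw [List.filterMap_cons]
        simp only [Sum.elim_inr]
        rw [ih, List.count_cons_of_ne (by simp)]
  have hcount' : ∀ j : Fin s, (inls (b₁ ++ a₁)).count j = 1 := by
    intro j
    rw [count_inls]
    have h := hcount j
    rw [List.count_append, List.count_cons_of_ne (by simp)] at h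
    rw [List.count_append]
    omega
  rcases scan (b₁ ++ a₁) (f (Sum.inr h0)) (hfr h0) with h0eq | ⟨P, d, hP, hd, hsnd, heq⟩
  · rw [h0eq, hτ0]; exact hnn
  · rw [heq, htracial]
    have hpermP : (P.map Prod.snd).Perm (List.finRange s) := by
      rw [List.perm_iff_count]
      intro j
      rw [hsnd, hcount' j, List.count_eq_one_of_mem (List.nodup_finRange s) (List.mem_finRange j)]
    have hPlen : P.length = s := by
      have := hpermP.length_eq
      simpa using this
    rcases P with _ | ⟨p₁, P'⟩
    · exfalso; rw [List.length_nil] at hPlen; omega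
    · have hfirst : d * ((( p₁ :: P').map g).prod) = ((d * p₁.1) * u p₁.2) * ((P'.map g).prod) := by
        rw [List.map_cons, List.prod_cons, hg, ← mul_assoc, ← mul_assoc]
      rcases mulTable d hd p₁.1 (hP p₁ List.mem_cons_self) with hz0 | hzmem
      · rw [hfirst, hz0, zero_mul, zero_mul, hτ0]; exact hnn
      · have : d * (((p₁ :: P').map g).prod) = (((d * p₁.1, p₁.2) :: P').map g).prod := by
          rw [hfirst, List.map_cons, List.prod_cons, hg, mul_assoc]
        rw [this]
        apply mainHolder
        · intro p hp
          rcases List.mem_cons.1 hp with rfl | hp'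
          · exact hzmem
          · exact hP p (List.mem_cons_of_mem _ hp')
        · have : ((d * p₁.1, p₁.2) :: P').map Prod.snd = (p₁ :: P').map Prod.snd := by simp
          rw [this]; exact hpermP
end

section
/- Sharpness of the Janson time in one variable: for a(ε) = 1 + εẑ with ẑ = (x + iy)/2 and x² = y² = 1, xy = −yx, the non-commutative L^p norm satisfies ‖a(ε)‖_p = 1 + (p/8)ε² + o(ε²) as ε → 0; consequently, if ‖a(e^{−t}ε)‖_r ≤ ‖a(ε)‖_p for all small ε > 0, then t ≥ (1/2)log(r/p). -/
open scoped Matrix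

/-- The normalized Schatten `p`-norm `‖a‖_p = τ(|a|^p)^{1/p}` of a `2×2` complex matrix,
where `τ` is the normalized trace: computed as `((Σ_i μ_i^{p/2})/2)^{1/p}` with `μ_i` the
eigenvalues of the positive matrix `aᴴa`. -/
noncomputable def schattenNorm (p : ℝ) (a : Matrix (Fin 2) (Fin 2) ℂ) : ℝ :=
  ((∑ i : Fin 2,
      ((Matrix.isHermitian_conjTranspose_mul_self a).eigenvalues i) ^ (p / 2)) / 2)
    ^ (1 / p)

/-- The element `x` (a self-adjoint generator with `x² = 1`). -/
def xMat : Matrix (Fin 2) (Fin 2) ℂ := !![0, 1; 1, 0]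

/-- The element `y` (a self-adjoint generator with `y² = 1`, `xy = −yx`). -/
def yMat : Matrix (Fin 2) (Fin 2) ℂ := !![0, -Complex.I; Complex.I, 0]

/-- `ẑ = (x + iy)/2`. -/
noncomputable def zhatMat : Matrix (Fin 2) (Fin 2) ℂ := (2 : ℂ)⁻¹ • (xMat + Complex.I • yMat)

/-- `a(ε) = 1 + ε·ẑ`. -/
noncomputable def aMat (ε : ℝ) : Matrix (Fin 2) (Fin 2) ℂ := 1 + (ε : ℂ) • zhatMat

lemma trace_eq_sum_eig {n : Type*} [Fintype n] [DecidableEq n] {A : Matrix n n ℂ}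
    (hA : A.IsHermitian) : A.trace = ∑ i, (hA.eigenvalues i : ℂ) := by
  exact hA.trace_eq_sum_eigenvalues

lemma aMat_conjTranspose_mul (ε : ℝ) :
    (aMat ε)ᴴ * aMat ε = !![1, (ε:ℂ); (ε:ℂ), 1+ε^2] := by
  have ha : aMat ε = !![1, (ε:ℂ); 0, 1] := by
    ext i j
    fin_cases i <;> fin_cases j <;>
      (simp [aMat, zhatMat, xMat, yMat, Matrix.one_apply, Complex.ext_iff]; try ring)
  rw [ha]
  ext i j
  fin_cases i <;> fin_cases j <;>
    (simp [Matrix.mul_apply, Fin.sum_univ_two, ← Complex.ofReal_pow, Complex.ext_iff]; try ring)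

/-- Closed form: `‖a(ε)‖_p = cosh(p · arcsinh(ε/2))^{1/p}`. -/
lemma schatten_formula (p ε : ℝ) :
    schattenNorm p (aMat ε) = (Real.cosh (p * Real.arsinh (ε/2))) ^ (1/p) := by
  set w := Real.arsinh (ε/2) with hw
  have hsinh : Real.sinh w = ε/2 := Real.sinh_arsinh _
  set hA := Matrix.isHermitian_conjTranspose_mul_self (aMat ε) with hhA
  set l0 := hA.eigenvalues 0 with hl0
  set l1 := hA.eigenvalues 1 with hl1
  have htrC : ((aMat ε)ᴴ * aMat ε).trace = ((2 + ε^2 : ℝ) : ℂ) := by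
    rw [aMat_conjTranspose_mul, Matrix.trace_fin_two_of]; push_cast; ring
  have hdetC : ((aMat ε)ᴴ * aMat ε).det = ((1 : ℝ) : ℂ) := by
    rw [aMat_conjTranspose_mul, Matrix.det_fin_two_of]; push_cast; ring
  have hsum : l0 + l1 = 2 + ε^2 := by
    have e1 := trace_eq_sum_eig hA
    rw [Fin.sum_univ_two, htrC, ← hl0, ← hl1] at e1
    exact_mod_cast e1.symm
  have hprod : l0 * l1 = 1 := by
    have e1 := hA.det_eq_prod_eigenvalues
    rw [Fin.prod_univ_two, hdetC, ← hl0, ← hl1] at e1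
    have e2 : ((l0 * l1 : ℝ) : ℂ) = ((1 : ℝ) : ℂ) := by push_cast; exact e1.symm
    exact Complex.ofReal_injective e2
  set ep := Real.exp (2*w) with hep
  set em := Real.exp (-(2*w)) with hem
  have hmul : ep * em = 1 := by rw [hep, hem, ← Real.exp_add]; simp
  have hee : ep + em = l0 + l1 := by
    have hc2 : ep + em = 2 * Real.cosh (2*w) := by
      rw [Real.cosh_eq, hep, hem]; ring
    rw [hc2, Real.cosh_two_mul, Real.cosh_sq, hsum, hsinh]; ring
  have hq : (l0 - ep) * (l0 - em) = 0 := by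
    linear_combination (-l0) * hee + hmul - hprod
  have hkey : l0 ^ (p/2) + l1 ^ (p/2) = ep ^ (p/2) + em ^ (p/2) := by
    rcases mul_eq_zero.mp hq with h | h
    · have h0 : l0 = ep := by linarith
      have h1 : l1 = em := by linarith [hee, hsum]
      rw [h0, h1]
    · have h0 : l0 = em := by linarith
      have h1 : l1 = ep := by linarith [hee, hsum]
      rw [h0, h1, add_comm]
  have hexp : ∀ a : ℝ, Real.exp a ^ (p/2) = Real.exp (a * (p/2)) := fun a => by
    rw [Real.rpow_def_of_pos (Real.exp_pos _), Real.log_exp]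
  have hmain : schattenNorm p (aMat ε)
      = ((ep ^ (p/2) + em ^ (p/2)) / 2) ^ (1/p) := by
    rw [schattenNorm, Fin.sum_univ_two, ← hl0, ← hl1, hkey]
  rw [hmain, hep, hem, hexp, hexp, Real.cosh_eq]
  ring_nf

open Filter Asymptotics

lemma half_map' : Filter.Tendsto (fun s : ℝ => s/2)
    (nhdsWithin 0 {(0:ℝ)}ᶜ) (nhdsWithin 0 {(0:ℝ)}ᶜ) := by
  apply tendsto_nhdsWithin_of_tendsto_nhds_of_eventually_within
  · have h0 : Filter.Tendsto (fun s : ℝ => s/2) (nhds 0) (nhds (0/2)) := tendsto_id.div_const 2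
    simpa using h0.mono_left nhdsWithin_le_nhds
  · filter_upwards [self_mem_nhdsWithin] with s hs
    simp only [Set.mem_compl_iff, Set.mem_singleton_iff] at hs ⊢
    intro h; exact hs (by linarith)

lemma sinh_slope : Filter.Tendsto (fun s : ℝ => Real.sinh s / s)
    (nhdsWithin 0 {(0:ℝ)}ᶜ) (nhds 1) := by
  have h := Real.hasDerivAt_sinh 0
  rw [hasDerivAt_iff_tendsto_slope] at h
  simpa [slope_fun_def, div_eq_inv_mul, Real.cosh_zero] using h

lemma arsinh_slope : Filter.Tendsto (fun s : ℝ => Real.arsinh s / s)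
    (nhdsWithin 0 {(0:ℝ)}ᶜ) (nhds 1) := by
  have h := Real.hasDerivAt_arsinh 0
  rw [hasDerivAt_iff_tendsto_slope] at h
  norm_num at h
  simpa [slope_fun_def, div_eq_inv_mul] using h

lemma cosh_slope : Filter.Tendsto (fun s : ℝ => (Real.cosh s - 1)/s^2)
    (nhdsWithin 0 {(0:ℝ)}ᶜ) (nhds (1/2)) := by
  have h2 := sinh_slope.comp half_map'
  have h3 : Filter.Tendsto
      (fun s : ℝ => (1/2) * ((Real.sinh (s/2) / (s/2)) * (Real.sinh (s/2)/(s/2))))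
      (nhdsWithin 0 {(0:ℝ)}ᶜ) (nhds (1/2)) := by
    have := (h2.mul h2).const_mul (1/2 : ℝ)
    simpa using this
  apply h3.congr'
  filter_upwards [self_mem_nhdsWithin] with s hs
  simp only [Set.mem_compl_iff, Set.mem_singleton_iff] at hs
  have hc : Real.cosh s - 1 = 2 * Real.sinh (s/2)^2 := by
    have h4 : Real.cosh (2 * (s/2)) = Real.cosh (s/2)^2 + Real.sinh (s/2)^2 :=
      Real.cosh_two_mul _
    rw [Real.cosh_sq] at h4
    have h5 : (2 : ℝ) * (s/2) = s := by ring
    rw [h5] at h4; linarith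
  rw [hc]
  field_simp

lemma rpow_slope (q : ℝ) : Filter.Tendsto (fun v : ℝ => (v ^ q - 1)/(v - 1))
    (nhdsWithin 1 {(1:ℝ)}ᶜ) (nhds q) := by
  have h := Real.hasDerivAt_rpow_const (x := (1:ℝ)) (p := q) (Or.inl one_ne_zero)
  rw [hasDerivAt_iff_tendsto_slope] at h
  simpa [slope_fun_def, Real.one_rpow, div_eq_inv_mul] using h

lemma main_tendsto (p : ℝ) (hp : 0 < p) :
    Filter.Tendsto (fun ε : ℝ => ((Real.cosh (p * Real.arsinh (ε/2)))^(1/p) - 1)/ε^2)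
      (nhdsWithin 0 {(0:ℝ)}ᶜ) (nhds (p/8)) := by
  set t := fun ε : ℝ => p * Real.arsinh (ε/2) with hts
  have htne : ∀ ε : ℝ, ε ≠ 0 → t ε ≠ 0 := by
    intro ε hε
    simp only [hts, mul_ne_zero_iff]
    refine ⟨hp.ne', ?_⟩
    rw [ne_eq, Real.arsinh_eq_zero_iff]
    exact fun h => hε (by linarith)
  have htcont : Continuous t :=
    continuous_const.mul (Real.continuous_arsinh.comp (continuous_id.div_const 2))
  have ht0 : Filter.Tendsto t (nhdsWithin 0 {(0:ℝ)}ᶜ) (nhdsWithin 0 {(0:ℝ)}ᶜ) := by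
    apply tendsto_nhdsWithin_of_tendsto_nhds_of_eventually_within
    · have h0 := htcont.tendsto 0
      simp only [hts, Real.arsinh_zero, zero_div, mul_zero] at h0
      exact h0.mono_left nhdsWithin_le_nhds
    · filter_upwards [self_mem_nhdsWithin] with ε hε
      exact htne ε (by simpa using hε)
  have hu : Filter.Tendsto (fun ε => Real.cosh (t ε)) (nhdsWithin 0 {(0:ℝ)}ᶜ)
      (nhdsWithin 1 {(1:ℝ)}ᶜ) := by
    apply tendsto_nhdsWithin_of_tendsto_nhds_of_eventually_within
    · have h0 := (Real.continuous_cosh.tendsto 0)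
      rw [Real.cosh_zero] at h0
      exact (h0.comp (ht0.mono_right nhdsWithin_le_nhds))
    · filter_upwards [self_mem_nhdsWithin] with ε hε
      have := Real.one_lt_cosh.mpr (htne ε (by simpa using hε))
      simp only [Set.mem_compl_iff, Set.mem_singleton_iff]
      exact this.ne'
  have hC : Filter.Tendsto (fun ε => t ε / ε) (nhdsWithin 0 {(0:ℝ)}ᶜ) (nhds (p/2)) := by
    have h2 := arsinh_slope.comp half_map'
    have h3 := h2.const_mul (p/2)
    rw [mul_one] at h3
    apply h3.congr'
    filter_upwards [self_mem_nhdsWithin] with ε hε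
    have hε0 : ε ≠ 0 := by simpa using hε
    simp only [Function.comp, hts]
    field_simp
  have hB := cosh_slope.comp ht0
  have hA := (rpow_slope (1/p)).comp hu
  have hcomb := (hA.mul hB).mul (hC.mul hC)
  have hval : 1/p * (1/2) * (p/2 * (p/2)) = p/8 := by field_simp; ring
  rw [hval] at hcomb
  apply hcomb.congr'
  filter_upwards [self_mem_nhdsWithin] with ε hε
  have hε0 : ε ≠ 0 := by simpa using hε
  have ht' : t ε ≠ 0 := htne ε hε0
  have hc1 : Real.cosh (t ε) - 1 ≠ 0 := sub_ne_zero.mpr (Real.one_lt_cosh.mpr ht').ne'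
  simp only [Function.comp]
  field_simp
  ring

lemma littleo_cosh (p : ℝ) (hp : 0 < p) :
    (fun ε : ℝ => (Real.cosh (p * Real.arsinh (ε/2)))^(1/p) - (1 + p/8*ε^2))
      =o[nhds 0] fun ε : ℝ => ε^2 := by
  rw [Asymptotics.isLittleO_iff_tendsto]
  · have hsup : nhds (0:ℝ) = nhdsWithin 0 {(0:ℝ)}ᶜ ⊔ pure 0 :=
      (nhdsNE_sup_pure 0).symm
    refine Filter.Tendsto.mono_left ?_ (le_of_eq hsup)
    rw [Filter.tendsto_sup]
    constructor
    · have h1 := (main_tendsto p hp).sub_const (p/8)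
      rw [sub_self] at h1
      apply h1.congr'
      filter_upwards [self_mem_nhdsWithin] with ε hε
      have hε0 : ε ≠ 0 := by simpa using hε
      field_simp
      ring
    · rw [Filter.tendsto_pure_left]
      intro s hs
      have h0 : ((Real.cosh (p * Real.arsinh ((0:ℝ)/2)))^(1/p) - (1 + p/8*(0:ℝ)^2))/(0:ℝ)^2
          = 0 := by
        simp
      rw [h0]
      exact mem_of_mem_nhds hs
  · intro x hx
    have hx0 : x = 0 := by
      have := pow_eq_zero_iff (n := 2) (by norm_num) |>.mp hx
      exact this
    subst hx0
    simp

lemma schatten_littleo (p : ℝ) (hp : 0 < p) :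
    ((fun ε : ℝ => schattenNorm p (aMat ε) - (1 + p / 8 * ε ^ 2))
        =o[nhds 0] fun ε : ℝ => ε ^ 2) := by
  have := littleo_cosh p hp
  apply this.congr' _ (Filter.EventuallyEq.refl _ _)
  apply Filter.Eventually.of_forall
  intro ε
  simp only [schatten_formula]

/-- Sharpness of the Janson time in one variable: in the `4`-dimensional `*`-algebra
generated by self-adjoint `x, y` with `x² = y² = 1`, `xy = −yx` (realized as `2×2`
matrices with normalized trace), for `a(ε) = 1 + εẑ` with `ẑ = (x + iy)/2`, the
non-commutative `L^p`-norm satisfies `‖a(ε)‖_p = 1 + (p/8)ε² + o(ε²)` as `ε → 0`;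
consequently, for `0 < p ≤ r`, if `‖a(e^{−t}ε)‖_r ≤ ‖a(ε)‖_p` for all small `ε > 0`
(note `e^{−tN}a(ε) = a(e^{−t}ε)`), then `t ≥ (1/2)log(r/p)`. -/
theorem janson_time_sharp_one_variable (p r : ℝ) (hp : 0 < p) (hpr : p ≤ r) :
    ((fun ε : ℝ => schattenNorm p (aMat ε) - (1 + p / 8 * ε ^ 2))
        =o[nhds 0] fun ε : ℝ => ε ^ 2) ∧
    ∀ t : ℝ,
      (∀ᶠ ε in nhdsWithin 0 (Set.Ioi 0),
        schattenNorm r (aMat (Real.exp (-t) * ε)) ≤ schattenNorm p (aMat ε)) →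
      (1 / 2) * Real.log (r / p) ≤ t := by
  have hr : 0 < r := lt_of_lt_of_le hp hpr
  refine ⟨schatten_littleo p hp, ?_⟩
  intro t ht
  set c := Real.exp (-t) with hc
  have hcpos : 0 < c := Real.exp_pos _
  -- the filter 𝓝[>]0 is finer than 𝓝[≠]0
  have hle : nhdsWithin (0:ℝ) (Set.Ioi 0) ≤ nhdsWithin 0 {(0:ℝ)}ᶜ :=
    nhdsWithin_mono 0 (fun x hx => by
      simp only [Set.mem_compl_iff, Set.mem_singleton_iff]
      exact ne_of_gt hx)
  -- the scaling map
  have hmap : Filter.Tendsto (fun ε : ℝ => c * ε) (nhdsWithin 0 (Set.Ioi 0))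
      (nhdsWithin 0 {(0:ℝ)}ᶜ) := by
    apply tendsto_nhdsWithin_of_tendsto_nhds_of_eventually_within
    · have h0 : Filter.Tendsto (fun ε : ℝ => c * ε) (nhds 0) (nhds (c * 0)) :=
        (continuous_const.mul continuous_id).tendsto 0
      rw [mul_zero] at h0
      exact h0.mono_left nhdsWithin_le_nhds
    · filter_upwards [self_mem_nhdsWithin] with ε hε
      simp only [Set.mem_compl_iff, Set.mem_singleton_iff]
      exact (mul_pos hcpos hε).ne'
  -- limit of (F_r(cε)-1)/ε²
  have hFr : Filter.Tendsto
      (fun ε : ℝ => (schattenNorm r (aMat (c * ε)) - 1)/ε^2)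
      (nhdsWithin 0 (Set.Ioi 0)) (nhds (c^2 * (r/8))) := by
    have h1 := (main_tendsto r hr).comp hmap
    have h2 := h1.const_mul (c^2)
    apply h2.congr'
    filter_upwards [self_mem_nhdsWithin] with ε hε
    have hε0 : ε ≠ 0 := ne_of_gt hε
    simp only [Function.comp, schatten_formula]
    field_simp
  -- limit of (F_p(ε)-1)/ε²
  have hFp : Filter.Tendsto
      (fun ε : ℝ => (schattenNorm p (aMat ε) - 1)/ε^2)
      (nhdsWithin 0 (Set.Ioi 0)) (nhds (p/8)) := by
    have h1 := (main_tendsto p hp).mono_left hle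
    apply h1.congr
    intro ε
    rw [schatten_formula]
  have hdiff := hFr.sub hFp
  have hkey : c^2 * (r/8) - p/8 ≤ 0 := by
    apply le_of_tendsto hdiff
    filter_upwards [ht, self_mem_nhdsWithin] with ε hε hε'
    have hε2 : (0:ℝ) ≤ ε^2 := sq_nonneg ε
    rw [div_sub_div_same]
    apply div_nonpos_of_nonpos_of_nonneg _ hε2
    linarith
  -- conclude
  have hrc : r * c^2 ≤ p := by linarith
  have hc2 : c^2 = Real.exp (-(2*t)) := by
    rw [hc, sq, ← Real.exp_add]; ring_nf
  have hlog : Real.exp (-(2*t)) ≤ p/r := by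
    rw [← hc2]
    rw [le_div_iff₀ hr] at *
    nlinarith
  have h2 : -(2*t) ≤ Real.log (p/r) := by
    have := Real.log_le_log (Real.exp_pos _) hlog
    rwa [Real.log_exp] at this
  have h3 : Real.log (p/r) = Real.log p - Real.log r := Real.log_div hp.ne' hr.ne'
  have h4 : Real.log (r/p) = Real.log r - Real.log p := Real.log_div hr.ne' hp.ne'
  rw [h4]
  linarith [h2, h3 ▸ h2]
end
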